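/- Let N : ℕ → ℕ be a function that is polynomially bounded, i.e., there exist constants C > 0 and k ∈ ℕ with N(d) ≤ C · d^k for all d ≥ 1. For each dimension d ≥ 1, let X₁, …, X_{N(d)}, x be N(d)+1 independent random points, each uniformly distributed on the closed unit ball of ℝ^d, and let p_d denote the probability that x lies in the convex hull of {X₁, …, X_{N(d)}}. Then p_d → 0 as d → ∞. -/

import Mathlib

open MeasureTheory Filter

/-- The uniform probability measure on the closed unit ball of `ℝ^d`. -/
noncomputable def uniformBall (d : ℕ) : Measure (EuclideanSpace ℝ (Fin d)) :=
  (volume (Metric.closedBall (0 : EuclideanSpace ℝ (Fin d)) 1))⁻¹ •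
    volume.restrict (Metric.closedBall (0 : EuclideanSpace ℝ (Fin d)) 1)

/-- The probability that a new uniform sample from the unit ball of `ℝ^d` lies in the
convex hull of `n` i.i.d. uniform samples from that ball. -/
noncomputable def interpProb (d n : ℕ) : ENNReal :=
  ((Measure.pi fun _ : Fin n => uniformBall d).prod (uniformBall d))
    {p | p.2 ∈ convexHull ℝ (Set.range p.1)}

/-!
If `x` lies in the convex hull of the `Xᵢ`, some `Xᵢ` satisfies `‖x‖² ≤ ⟪x, Xᵢ⟫`: otherwise all
`Xᵢ` lie in the convex set `{y | ⟪x, y⟫ < ‖x‖²}`, which misses `x`. For `‖y‖ ≤ 1` that inequality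
forces `‖y - x‖² ≤ 1 - ‖x‖²`, so the cap it cuts out of the unit ball sits in a ball of radius
`√(1 - ‖x‖²)`. Splitting according to whether `‖x‖ < r`, the interpolation probability is at most
`(n + 1) rᵈ` whenever `1 - r² ≤ r²` (`r = 1/√2` gives the Bárány–Füredi rate `(n + 1) 2^{-d/2}`),
and a polynomially bounded `n = N d` cannot compete with the geometric decay of `rᵈ`.
-/

open scoped RealInnerProductSpace

section InnerProductSpace

variable {E : Type*} [NormedAddCommGroup E] [InnerProductSpace ℝ E]

theorem exists_norm_sq_le_inner_of_mem_convexHull {s : Set E} {x : E}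
    (hx : x ∈ convexHull ℝ s) : ∃ y ∈ s, ‖x‖ ^ 2 ≤ ⟪x, y⟫ := by
  by_contra! h
  have hconv : Convex ℝ {y : E | ⟪x, y⟫ < ‖x‖ ^ 2} :=
    convex_halfSpace_lt (innerₛₗ ℝ x).isLinear _
  have hxx : ⟪x, x⟫ < ‖x‖ ^ 2 := convexHull_min h hconv hx
  exact (real_inner_self_eq_norm_sq x ▸ hxx).false

theorem norm_sub_sq_le_of_norm_sq_le_inner {x y : E} (hy : ‖y‖ ≤ 1)
    (hxy : ‖x‖ ^ 2 ≤ ⟪x, y⟫) : ‖y - x‖ ^ 2 ≤ 1 - ‖x‖ ^ 2 := by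
  rw [norm_sub_sq_real, real_inner_comm]
  nlinarith [norm_nonneg y]

end InnerProductSpace

theorem MeasureTheory.Measure.prod_le_of_forall_slice_le {α β : Type*} [MeasurableSpace α]
    [MeasurableSpace β] {μ : Measure α} {ν : Measure β} [SFinite μ] [IsProbabilityMeasure ν]
    {s : Set (α × β)} (hs : MeasurableSet s) {c : ENNReal}
    (h : ∀ b, μ ((fun a => (a, b)) ⁻¹' s) ≤ c) : μ.prod ν s ≤ c := by
  rw [Measure.prod_apply_symm hs]
  calc ∫⁻ b, μ ((fun a => (a, b)) ⁻¹' s) ∂ν ≤ ∫⁻ _, c ∂ν := lintegral_mono h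
    _ = c := by rw [lintegral_const, measure_univ, mul_one]

section UniformBall

variable {d : ℕ}

theorem volume_unitClosedBall_ne_zero :
    volume (Metric.closedBall (0 : EuclideanSpace ℝ (Fin d)) 1) ≠ 0 :=
  (Metric.measure_closedBall_pos _ _ one_pos).ne'

theorem volume_unitClosedBall_ne_top :
    volume (Metric.closedBall (0 : EuclideanSpace ℝ (Fin d)) 1) ≠ ⊤ :=
  measure_closedBall_lt_top.ne

theorem uniformBall_apply (s : Set (EuclideanSpace ℝ (Fin d))) :
    uniformBall d s =
      (volume (Metric.closedBall (0 : EuclideanSpace ℝ (Fin d)) 1))⁻¹ *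
        volume (s ∩ Metric.closedBall 0 1) := by
  rw [uniformBall, Measure.smul_apply, smul_eq_mul,
    Measure.restrict_apply' Metric.isClosed_closedBall.measurableSet]

instance isProbabilityMeasure_uniformBall : IsProbabilityMeasure (uniformBall d) :=
  ⟨by rw [uniformBall_apply, Set.univ_inter,
    ENNReal.inv_mul_cancel volume_unitClosedBall_ne_zero volume_unitClosedBall_ne_top]⟩

theorem uniformBall_le_of_inter_subset_closedBall {s : Set (EuclideanSpace ℝ (Fin d))}
    {u : EuclideanSpace ℝ (Fin d)} {r : ℝ} (hr : 0 ≤ r)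
    (h : s ∩ Metric.closedBall 0 1 ⊆ Metric.closedBall u r) :
    uniformBall d s ≤ ENNReal.ofReal (r ^ d) := by
  set V := volume (Metric.closedBall (0 : EuclideanSpace ℝ (Fin d)) 1)
  have hball : volume (Metric.closedBall u r) = ENNReal.ofReal (r ^ d) * V := by
    rw [Measure.addHaar_closedBall' _ _ hr, finrank_euclideanSpace_fin]
  calc uniformBall d s ≤ V⁻¹ * volume (Metric.closedBall u r) := by
        rw [uniformBall_apply]; gcongr
    _ = ENNReal.ofReal (r ^ d) := by
        rw [hball, mul_comm, mul_assoc, ENNReal.mul_inv_cancel volume_unitClosedBall_ne_zero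
          volume_unitClosedBall_ne_top, mul_one]

theorem uniformBall_ball_le {r : ℝ} (hr : 0 ≤ r) :
    uniformBall d (Metric.ball 0 r) ≤ ENNReal.ofReal (r ^ d) :=
  uniformBall_le_of_inter_subset_closedBall hr
    (Set.inter_subset_left.trans Metric.ball_subset_closedBall)

theorem uniformBall_cap_le {x : EuclideanSpace ℝ (Fin d)} {r : ℝ} (hr : 0 ≤ r)
    (hx : 1 - ‖x‖ ^ 2 ≤ r ^ 2) :
    uniformBall d {y | ‖x‖ ^ 2 ≤ ⟪x, y⟫} ≤ ENNReal.ofReal (r ^ d) := by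
  refine uniformBall_le_of_inter_subset_closedBall (u := x) hr fun y ⟨hxy, hy⟩ => ?_
  rw [mem_closedBall_zero_iff] at hy
  rw [Metric.mem_closedBall, dist_eq_norm,
    ← pow_le_pow_iff_left₀ (norm_nonneg _) hr two_ne_zero]
  exact (norm_sub_sq_le_of_norm_sq_le_inner hy hxy).trans hx

end UniformBall

theorem interpProb_le {r : ℝ} (hr : 0 ≤ r) (hr2 : 1 - r ^ 2 ≤ r ^ 2) (d n : ℕ) :
    interpProb d n ≤ (n + 1) * ENNReal.ofReal (r ^ d) := by
  set E := EuclideanSpace ℝ (Fin d)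
  set μ := Measure.pi fun _ : Fin n => uniformBall d
  set cap : Fin n → Set ((Fin n → E) × E) :=
    fun i => {p | r ≤ ‖p.2‖ ∧ ‖p.2‖ ^ 2 ≤ ⟪p.2, p.1 i⟫}
  have hcover : {p : (Fin n → E) × E | p.2 ∈ convexHull ℝ (Set.range p.1)} ⊆
      Prod.snd ⁻¹' Metric.ball 0 r ∪ ⋃ i, cap i := by
    rintro ⟨X, x⟩ hx
    rcases lt_or_ge ‖x‖ r with hxr | hxr
    · exact Or.inl (mem_ball_zero_iff.2 hxr)
    · obtain ⟨_, ⟨i, rfl⟩, hi⟩ := exists_norm_sq_le_inner_of_mem_convexHull hx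
      exact Or.inr (Set.mem_iUnion.2 ⟨i, hxr, hi⟩)
  have hcap_meas : ∀ i, MeasurableSet (cap i) := by
    intro i
    have hnorm : Continuous fun p : (Fin n → E) × E => ‖p.2‖ := continuous_snd.norm
    have hinner : Continuous fun p : (Fin n → E) × E => ⟪p.2, p.1 i⟫ :=
      continuous_snd.inner ((continuous_apply i).comp continuous_fst)
    exact ((isClosed_le continuous_const hnorm).inter
      (isClosed_le (hnorm.pow 2) hinner)).measurableSet
  have hcap : ∀ i, μ.prod (uniformBall d) (cap i) ≤ ENNReal.ofReal (r ^ d) := by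
    refine fun i => Measure.prod_le_of_forall_slice_le (hcap_meas i) fun x => ?_
    rcases lt_or_ge ‖x‖ r with hxr | hxr
    · have hempty : (fun X => (X, x)) ⁻¹' cap i = ∅ :=
        Set.eq_empty_of_forall_notMem fun X hX => hxr.not_ge hX.1
      simp [hempty]
    · have hslice : (fun X => (X, x)) ⁻¹' cap i = Function.eval i ⁻¹' {y | ‖x‖ ^ 2 ≤ ⟪x, y⟫} := by
        ext X; simp [cap, hxr]
      have hmeas : MeasurableSet {y : E | ‖x‖ ^ 2 ≤ ⟪x, y⟫} :=
        (isClosed_le continuous_const (continuous_const.inner continuous_id)).measurableSet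
      rw [hslice, (measurePreserving_eval _ i).measure_preimage hmeas.nullMeasurableSet]
      exact uniformBall_cap_le hr ((sub_le_sub_left (pow_le_pow_left₀ hr hxr 2) 1).trans hr2)
  calc interpProb d n
      ≤ μ.prod (uniformBall d) (Prod.snd ⁻¹' Metric.ball 0 r ∪ ⋃ i, cap i) :=
        measure_mono hcover
    _ ≤ uniformBall d (Metric.ball 0 r) + ∑ i, μ.prod (uniformBall d) (cap i) := by
        refine (measure_union_le _ _).trans ?_
        rw [measurePreserving_snd.measure_preimage measurableSet_ball.nullMeasurableSet]
        gcongr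
        exact measure_iUnion_fintype_le _ _
    _ ≤ ENNReal.ofReal (r ^ d) + ∑ _i : Fin n, ENNReal.ofReal (r ^ d) :=
        add_le_add (uniformBall_ball_le hr) (Finset.sum_le_sum fun i _ => hcap i)
    _ = (n + 1) * ENNReal.ofReal (r ^ d) := by
        rw [Finset.sum_const, Finset.card_univ, Fintype.card_fin, nsmul_eq_mul]; ring

theorem tendsto_natCast_add_one_mul_pow_of_le_poly {N : ℕ → ℕ} {C : ℝ} {k : ℕ}
    (hN : ∀ d : ℕ, 1 ≤ d → (N d : ℝ) ≤ C * (d : ℝ) ^ k) {r : ℝ} (hr : 0 ≤ r) (hr1 : r < 1) :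
    Tendsto (fun d : ℕ => ((N d : ℝ) + 1) * r ^ d) atTop (nhds 0) := by
  refine squeeze_zero' (Eventually.of_forall fun d => by positivity)
    (g := fun d : ℕ => (C + 1) * ((d : ℝ) ^ k * r ^ d)) ?_ ?_
  · filter_upwards [eventually_ge_atTop 1] with d hd
    have hdk : (1 : ℝ) ≤ (d : ℝ) ^ k := one_le_pow₀ (by exact_mod_cast hd)
    have hNd : (N d : ℝ) + 1 ≤ (C + 1) * (d : ℝ) ^ k := by linarith [hN d hd]
    calc ((N d : ℝ) + 1) * r ^ d ≤ (C + 1) * (d : ℝ) ^ k * r ^ d := by gcongr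
      _ = (C + 1) * ((d : ℝ) ^ k * r ^ d) := mul_assoc _ _ _
  · simpa using (tendsto_pow_const_mul_const_pow_of_lt_one k hr hr1).const_mul (C + 1)

theorem interpolation_never_happens_poly (N : ℕ → ℕ)
    (hN : ∃ C : ℝ, 0 < C ∧ ∃ k : ℕ, ∀ d : ℕ, 1 ≤ d → (N d : ℝ) ≤ C * (d : ℝ) ^ k) :
    Tendsto (fun d : ℕ => interpProb d (N d)) atTop (nhds 0) := by
  obtain ⟨C, -, k, hNk⟩ := hN
  have hbound : Tendsto (fun d : ℕ => ENNReal.ofReal (((N d : ℝ) + 1) * (3 / 4) ^ d))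
      atTop (nhds 0) := by
    simpa using ENNReal.tendsto_ofReal
      (tendsto_natCast_add_one_mul_pow_of_le_poly hNk (by norm_num) (by norm_num))
  refine tendsto_of_tendsto_of_tendsto_of_le_of_le tendsto_const_nhds hbound (fun _ => zero_le)
    fun d => (interpProb_le (r := 3 / 4) (by norm_num) (by norm_num) d (N d)).trans_eq ?_
  rw [ENNReal.ofReal_mul (by positivity), ENNReal.ofReal_add (by positivity) zero_le_one,
    ENNReal.ofReal_natCast, ENNReal.ofReal_one]
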